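/- arXiv:1009.1092 — 5 statements merged into one kernel-verified Lean document; each statement's English description precedes it below -/
import Mathlib

section
/- For every complex number s with Re(s) > 0, the integral s·∫₁^∞ ν(x)·x^(−s−1) dx equals the Dirichlet eta function η(s) = ∑_{k=1}^∞ (1/(2k−1)^s − 1/(2k)^s). -/
open MeasureTheory

noncomputable def nu (x : ℝ) : ℝ := 2 * Int.fract (x / 2) - Int.fract x

lemma nu_of_odd {x : ℝ} {m : ℤ} (h : ⌊x⌋ = 2 * m + 1) : nu x = 1 := by
  set f := Int.fract x with hf
  have h0 : 0 ≤ f := Int.fract_nonneg x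
  have h1 : f < 1 := Int.fract_lt_one x
  have hx : x = 2 * (m : ℝ) + 1 + f := by
    have := Int.floor_add_fract x
    rw [h] at this; push_cast at this; linarith
  have h2 : x / 2 = (m : ℝ) + (1 + f) / 2 := by rw [hx]; ring
  have h3 : Int.fract (x / 2) = (1 + f) / 2 := by
    rw [h2, Int.fract_intCast_add]
    exact Int.fract_eq_self.2 ⟨by linarith, by linarith⟩
  simp only [nu, h3, ← hf]; ring

lemma nu_of_even {x : ℝ} {m : ℤ} (h : ⌊x⌋ = 2 * m) : nu x = 0 := by
  set f := Int.fract x with hf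
  have h0 : 0 ≤ f := Int.fract_nonneg x
  have h1 : f < 1 := Int.fract_lt_one x
  have hx : x = 2 * (m : ℝ) + f := by
    have := Int.floor_add_fract x
    rw [h] at this; push_cast at this; linarith
  have h2 : x / 2 = (m : ℝ) + f / 2 := by rw [hx]; ring
  have h3 : Int.fract (x / 2) = f / 2 := by
    rw [h2, Int.fract_intCast_add]
    exact Int.fract_eq_self.2 ⟨by linarith, by linarith⟩
  simp only [nu, h3, ← hf]; ring

theorem stmt_4 : ∀ s : ℂ, 0 < s.re →
    s * ∫ x in Set.Ioi (1 : ℝ), (nu x : ℂ) * (x : ℂ) ^ (-s - 1) =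
      ∑' k : ℕ, ((2 * ((k : ℂ) + 1) - 1) ^ (-s) - (2 * ((k : ℂ) + 1)) ^ (-s)) := by
  intro s hs
  have hs0 : s ≠ 0 := by
    intro h; rw [h] at hs; simp at hs
  set g : ℝ → ℂ := fun x => (x : ℂ) ^ (-s - 1) with hg
  set S : ℕ → Set ℝ := fun k => Set.Ico ((2 * k + 1 : ℝ)) (2 * k + 2) with hS
  have hmeas : ∀ k, MeasurableSet (S k) := fun k => measurableSet_Ico
  have hdisj : Pairwise (Function.onFun Disjoint S) := by
    intro i j hij
    rw [Function.onFun, Set.disjoint_left]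
    intro x hx1 hx2
    have h1 := hx1.1; have h2 := hx1.2; have h3 := hx2.1; have h4 := hx2.2
    rcases hij.lt_or_gt with h | h
    · have : (i : ℝ) + 1 ≤ j := by exact_mod_cast h
      linarith
    · have : (j : ℝ) + 1 ≤ i := by exact_mod_cast h
      linarith
  have hsub : (⋃ k, S k) ⊆ Set.Ioi (1 / 2 : ℝ) := by
    intro x hx
    obtain ⟨k, hk⟩ := Set.mem_iUnion.1 hx
    have h1 : (2 * k + 1 : ℝ) ≤ x := hk.1
    have : (0 : ℝ) ≤ k := Nat.cast_nonneg k
    simp only [Set.mem_Ioi]; linarith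
  have hint : IntegrableOn g (⋃ k, S k) := by
    apply (integrableOn_Ioi_cpow_of_lt (a := -s - 1) ?_ (c := 1 / 2) (by norm_num)).mono_set hsub
    simp only [Complex.sub_re, Complex.neg_re, Complex.one_re]; linarith
  -- pointwise equality on Ioi 1
  have key : Set.EqOn (fun x : ℝ => (nu x : ℂ) * (x : ℂ) ^ (-s - 1))
      ((⋃ k, S k).indicator g) (Set.Ioi 1) := by
    intro x hx
    have hx1 : (1 : ℝ) < x := hx
    rcases Int.even_or_odd ⌊x⌋ with ⟨m, hm⟩ | ⟨m, hm⟩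
    · have hmem : x ∉ ⋃ k, S k := by
        intro hmem
        obtain ⟨k, hk⟩ := Set.mem_iUnion.1 hmem
        have hfl : ⌊x⌋ = (2 * k + 1 : ℤ) := by
          rw [Int.floor_eq_iff]
          push_cast
          exact ⟨hk.1, by linarith [hk.2]⟩
        omega
      have hnu : nu x = 0 := nu_of_even (m := m) (by omega)
      simp [Set.indicator_of_notMem hmem, hnu]
    · have hfl1 : (1 : ℤ) ≤ ⌊x⌋ := by
        rw [Int.le_floor]; exact_mod_cast hx1.le
      have hm0 : 0 ≤ m := by omega
      have hmem : x ∈ ⋃ k, S k := by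
        refine Set.mem_iUnion.2 ⟨m.toNat, ?_⟩
        have hfl : ((⌊x⌋ : ℝ)) ≤ x ∧ x < ⌊x⌋ + 1 := ⟨Int.floor_le x, Int.lt_floor_add_one x⟩
        have hcast : ((m.toNat : ℝ)) = (m : ℝ) := by exact_mod_cast Int.toNat_of_nonneg hm0
        constructor
        · rw [hcast]
          have := hfl.1; rw [hm] at this; push_cast at this; linarith
        · rw [hcast]
          have := hfl.2; rw [hm] at this; push_cast at this; linarith
      have hnu : nu x = 1 := nu_of_odd hm
      simp [Set.indicator_of_mem hmem, hnu, hg]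
  have hae : (Set.Ioi 1 ∩ ⋃ k, S k : Set ℝ) =ᵐ[volume] (⋃ k, S k) := by
    rw [MeasureTheory.ae_eq_set]
    constructor
    · have : (Set.Ioi 1 ∩ ⋃ k, S k) \ (⋃ k, S k) = (∅ : Set ℝ) :=
        Set.diff_eq_empty.2 Set.inter_subset_right
      simp [this]
    · refine measure_mono_null ?_ (measure_singleton (1 : ℝ))
      intro x hx
      obtain ⟨hxu, hxn⟩ := hx
      obtain ⟨k, hk⟩ := Set.mem_iUnion.1 hxu
      have h1 : (2 * k + 1 : ℝ) ≤ x := hk.1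
      have hk0 : (0 : ℝ) ≤ k := Nat.cast_nonneg k
      have hx1 : x ≤ 1 := not_lt.1 fun h => hxn ⟨h, hxu⟩
      have : x = 1 := le_antisymm hx1 (by linarith)
      exact Set.mem_singleton_iff.2 this
  calc s * ∫ x in Set.Ioi (1 : ℝ), (nu x : ℂ) * (x : ℂ) ^ (-s - 1)
      = s * ∫ x in Set.Ioi (1 : ℝ), (⋃ k, S k).indicator g x := by
        rw [setIntegral_congr_fun measurableSet_Ioi key]
    _ = s * ∫ x in Set.Ioi 1 ∩ ⋃ k, S k, g x := by
        rw [setIntegral_indicator (MeasurableSet.iUnion hmeas)]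
    _ = s * ∫ x in (⋃ k, S k), g x := by rw [setIntegral_congr_set hae]
    _ = s * ∑' k, ∫ x in S k, g x := by rw [integral_iUnion hmeas hdisj hint]
    _ = ∑' k : ℕ, ((2 * ((k : ℂ) + 1) - 1) ^ (-s) - (2 * ((k : ℂ) + 1)) ^ (-s)) := by
        rw [← tsum_mul_left]
        apply tsum_congr
        intro k
        have hab : (2 * k + 1 : ℝ) ≤ 2 * k + 2 := by linarith
        have hcalc : ∫ x in S k, g x =
            (((2 * k + 2 : ℝ) : ℂ) ^ (-s) - ((2 * k + 1 : ℝ) : ℂ) ^ (-s)) / (-s) := by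
          rw [hS]
          rw [MeasureTheory.integral_Ico_eq_integral_Ioo,
            ← MeasureTheory.integral_Ioc_eq_integral_Ioo,
            ← intervalIntegral.integral_of_le hab]
          rw [integral_cpow]
          · norm_num
          · right
            constructor
            · intro h
              apply hs0
              have : s = 0 := by linear_combination -h - 1
              exact this
            · intro h
              rw [Set.mem_uIcc] at h
              have h0 : (0:ℝ) ≤ k := Nat.cast_nonneg k
              rcases h with ⟨h1, _⟩ | ⟨h1, _⟩ <;> linarith
        rw [hcalc]
        have e1 : (2 * ((k : ℂ) + 1) - 1) = ((2 * k + 1 : ℝ) : ℂ) := by push_cast; ring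
        have e2 : (2 * ((k : ℂ) + 1)) = ((2 * k + 2 : ℝ) : ℂ) := by push_cast; ring
        rw [e1, e2, div_neg, mul_neg, ← mul_div_assoc, mul_div_cancel_left₀ _ hs0, neg_sub]
end

section
/- For every real θ with 0 < θ ≤ 1 and every complex s with Re(s) > 0, ∫₀¹ ν(θ/x)·x^(s−1) dx = θ^s·η(s)/s. -/
open MeasureTheory

noncomputable def eta (s : ℂ) : ℂ :=
  ∑' k : ℕ, ((2 * ((k : ℂ) + 1) - 1) ^ (-s) - (2 * ((k : ℂ) + 1)) ^ (-s))

lemma nu_even {y : ℝ} (h : Even ⌊y⌋) : nu y = 0 := by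
  obtain ⟨m, hm⟩ := h
  have h1 : (⌊y⌋ : ℝ) ≤ y := Int.floor_le y
  have h2 : y < ⌊y⌋ + 1 := Int.lt_floor_add_one y
  have hf : ⌊y / 2⌋ = m := by
    rw [Int.floor_eq_iff]
    constructor <;> push_cast [hm] at h1 h2 ⊢ <;> linarith
  unfold nu
  rw [Int.fract, Int.fract, hf]
  push_cast [hm]
  ring

lemma nu_odd {y : ℝ} (h : Odd ⌊y⌋) : nu y = 1 := by
  obtain ⟨m, hm⟩ := h
  have h1 : (⌊y⌋ : ℝ) ≤ y := Int.floor_le y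
  have h2 : y < ⌊y⌋ + 1 := Int.lt_floor_add_one y
  have hf : ⌊y / 2⌋ = m := by
    rw [Int.floor_eq_iff]
    constructor <;> push_cast [hm] at h1 h2 ⊢ <;> linarith
  unfold nu
  rw [Int.fract, Int.fract, hf]
  push_cast [hm]
  ring

theorem stmt_6 : ∀ θ : ℝ, 0 < θ → θ ≤ 1 → ∀ s : ℂ, 0 < s.re →
    ∫ x in Set.Ioo (0 : ℝ) 1, (nu (θ / x) : ℂ) * (x : ℂ) ^ (s - 1) =
      (θ : ℂ) ^ s * eta s / s := by
  intro θ hθ0 hθ1 s hs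
  have hs0 : s ≠ 0 := fun h => by simp [h] at hs
  set g : ℝ → ℂ := fun x => (x : ℂ) ^ (s - 1) with hg
  set I : ℕ → Set ℝ := fun k => Set.Ioc (θ / (2 * k + 2)) (θ / (2 * k + 1)) with hIdef
  set U : Set ℝ := ⋃ k, I k with hU
  have hd1 : ∀ k : ℕ, (0:ℝ) < 2 * k + 1 := fun k => by positivity
  have hd2 : ∀ k : ℕ, (0:ℝ) < 2 * k + 2 := fun k => by positivity
  have hIk : ∀ k : ℕ, θ / (2 * (k:ℝ) + 2) < θ / (2 * k + 1) := fun k =>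
    div_lt_div_of_pos_left hθ0 (hd1 k) (by linarith)
  have hIsub : ∀ k : ℕ, I k ⊆ Set.Ioc (0:ℝ) 1 := by
    intro k x hx
    refine ⟨lt_trans (by positivity) hx.1, hx.2.trans ?_⟩
    calc θ / (2 * (k:ℝ) + 1) ≤ θ / 1 := by
            apply div_le_div_of_nonneg_left hθ0.le one_pos
            linarith [Nat.cast_nonneg (α := ℝ) k]
      _ = θ := div_one θ
      _ ≤ 1 := hθ1
  have hUsub : U ⊆ Set.Ioc (0:ℝ) 1 := Set.iUnion_subset hIsub
  have hmem : ∀ x : ℝ, 0 < x → (x ∈ U ↔ Odd ⌊θ / x⌋) := by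
    intro x hx
    constructor
    · rintro ⟨_, ⟨k, rfl⟩, hxk⟩
      have h1 : (2 * (k:ℝ) + 1) * x ≤ θ := by
        have := (le_div_iff₀ (hd1 k)).mp hxk.2
        linarith
      have h2 : θ < (2 * (k:ℝ) + 2) * x := by
        have := (div_lt_iff₀ (hd2 k)).mp hxk.1
        linarith
      have hfl : ⌊θ / x⌋ = 2 * (k:ℤ) + 1 := by
        rw [Int.floor_eq_iff]
        constructor
        · rw [le_div_iff₀ hx]; push_cast; linarith
        · rw [div_lt_iff₀ hx]; push_cast; linarith
      rw [hfl]
      exact ⟨k, by ring⟩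
    · intro hodd
      have hpos : 0 < θ / x := div_pos hθ0 hx
      have hm0 : 0 ≤ ⌊θ / x⌋ := Int.floor_nonneg.mpr hpos.le
      obtain ⟨j, hj⟩ := hodd
      have hj0 : 0 ≤ j := by omega
      set k : ℕ := j.toNat with hk
      have hjk : (j : ℝ) = (k : ℝ) := by
        rw [hk]; norm_cast; omega
      have h1 : (2 * (k:ℝ) + 1) ≤ θ / x := by
        have := Int.floor_le (θ / x)
        rw [hj] at this; push_cast at this; rw [← hjk]; linarith
      have h2 : θ / x < 2 * (k:ℝ) + 2 := by
        have := Int.lt_floor_add_one (θ / x)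
        rw [hj] at this; push_cast at this; rw [← hjk]; linarith
      refine Set.mem_iUnion.mpr ⟨k, ?_, ?_⟩
      · rw [div_lt_iff₀ (hd2 k)]
        have := (div_lt_iff₀ hx).mp h2
        linarith
      · rw [le_div_iff₀ (hd1 k)]
        have := (le_div_iff₀ hx).mp h1
        linarith
  have hpt : Set.EqOn (fun x : ℝ => (nu (θ / x) : ℂ) * (x : ℂ) ^ (s - 1))
      (U.indicator g) (Set.Ioc (0:ℝ) 1) := by
    intro x hx
    show (nu (θ / x) : ℂ) * (x : ℂ) ^ (s - 1) = U.indicator g x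
    by_cases hxU : x ∈ U
    · rw [Set.indicator_of_mem hxU, nu_odd ((hmem x hx.1).mp hxU)]
      simp [hg]
    · rw [Set.indicator_of_notMem hxU,
        nu_even (Int.not_odd_iff_even.mp (fun h => hxU ((hmem x hx.1).mpr h)))]
      simp
  have hmeas : ∀ k : ℕ, MeasurableSet (I k) := fun k => measurableSet_Ioc
  have hUmeas : MeasurableSet U := MeasurableSet.iUnion hmeas
  have hdisj : Pairwise (Function.onFun Disjoint I) := by
    have key : ∀ j k : ℕ, j < k → Disjoint (I j) (I k) := by
      intro j k hjk
      rw [hIdef, Set.Ioc_disjoint_Ioc]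
      refine le_trans (min_le_right _ _) (le_trans ?_ (le_max_left _ _))
      apply div_le_div_of_nonneg_left hθ0.le (hd2 j)
      have : (j:ℝ) + 1 ≤ k := by exact_mod_cast hjk
      linarith
    intro j k hjk
    rcases lt_or_gt_of_ne hjk with h | h
    · exact key j k h
    · exact (key k j h).symm
  have hint : IntegrableOn g (Set.Ioc (0:ℝ) 1) := by
    rw [← intervalIntegrable_iff_integrableOn_Ioc_of_le zero_le_one]
    exact intervalIntegral.intervalIntegrable_cpow' (by simp; linarith)
  have hUint : IntegrableOn g U := hint.mono_set hUsub
  have hdivpow : ∀ c : ℝ, 0 < c → ((θ / c : ℝ) : ℂ) ^ s = (θ:ℂ) ^ s * (c:ℂ) ^ (-s) := by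
    intro c hc
    rw [div_eq_mul_inv, Complex.ofReal_mul,
      Complex.mul_cpow_ofReal_nonneg hθ0.le (inv_nonneg.mpr hc.le)]
    congr 1
    rw [Complex.ofReal_inv, Complex.inv_cpow _ _
      (by rw [Complex.arg_ofReal_of_nonneg hc.le]; exact Real.pi_ne_zero.symm),
      Complex.cpow_neg]
  have hIint : ∀ k : ℕ, ∫ x in I k, g x =
      ((θ:ℂ) ^ s * ((2 * ((k:ℂ) + 1) - 1) ^ (-s) - (2 * ((k:ℂ) + 1)) ^ (-s))) / s := by
    intro k
    have hle := (hIk k).le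
    rw [hIdef]
    simp only [hg]
    rw [← intervalIntegral.integral_of_le hle,
      integral_cpow (Or.inl (by simp; linarith))]
    rw [sub_add_cancel]
    rw [hdivpow _ (hd1 k), hdivpow _ (hd2 k)]
    have e1 : ((2 * (k:ℝ) + 1 : ℝ) : ℂ) = 2 * ((k:ℂ) + 1) - 1 := by push_cast; ring
    have e2 : ((2 * (k:ℝ) + 2 : ℝ) : ℂ) = 2 * ((k:ℂ) + 1) := by push_cast; ring
    rw [e1, e2]
    ring
  calc ∫ x in Set.Ioo (0:ℝ) 1, (nu (θ / x) : ℂ) * (x : ℂ) ^ (s - 1)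
      = ∫ x in Set.Ioc (0:ℝ) 1, (nu (θ / x) : ℂ) * (x : ℂ) ^ (s - 1) :=
        (integral_Ioc_eq_integral_Ioo).symm
    _ = ∫ x in Set.Ioc (0:ℝ) 1, U.indicator g x := setIntegral_congr_fun measurableSet_Ioc hpt
    _ = ∫ x in U, g x := by
        rw [setIntegral_indicator hUmeas, Set.inter_eq_right.mpr hUsub]
    _ = ∑' k, ∫ x in I k, g x := integral_iUnion hmeas hdisj hUint
    _ = ∑' k : ℕ, ((θ:ℂ) ^ s * ((2 * ((k:ℂ) + 1) - 1) ^ (-s) - (2 * ((k:ℂ) + 1)) ^ (-s))) / s :=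
        tsum_congr hIint
    _ = (θ:ℂ) ^ s * eta s / s := by
        rw [eta, ← tsum_mul_left, ← tsum_div_const]
end

section
/- For every real x ≥ 0, the sum ∑_{k=1}^∞ μ(k)·ν(x/k) is a finite sum (only terms with k ≤ x are nonzero) and equals 0 if 0 ≤ x < 1, equals 1 if 1 ≤ x < 2, and equals −1 if x ≥ 2. -/
/-! For `y ≥ 0` one has `ν y = ⌊y⌋ - 2 ⌊y / 2⌋`, and with `N = ⌊x⌋` also `⌊x / k⌋ = ⌊N / k⌋` and
`⌊x / 2k⌋ = ⌊⌊N / 2⌋ / k⌋`. The sum therefore splits into two instances of the Möbius identity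
`∑_{k ≤ M} μ k ⌊M / k⌋ = [M ≥ 1]`, which is `∑_{n ≤ M} (μ * ζ) n` summed the other way round, and
equals `[x ≥ 1] - 2 [x ≥ 2]`. -/

open ArithmeticFunction

open Finset
open scoped ArithmeticFunction.Moebius

theorem sum_Ioc_moebius_mul_div {R : Type*} [Ring R] (N : ℕ) :
    ∑ n ∈ Ioc 0 N, (μ n : R) * (N / n : ℕ) = if N = 0 then 0 else 1 := by
  have h := sum_Ioc_mul_zeta_eq_sum (μ : ArithmeticFunction R) N
  simp only [coe_moebius_mul_coe_zeta, intCoe_apply] at h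
  rw [← h]
  rcases Nat.eq_zero_or_pos N with rfl | hN
  · simp
  · rw [if_neg hN.ne']
    exact (sum_eq_single_of_mem 1 (mem_Ioc.2 ⟨one_pos, hN⟩) fun n _ hn => one_apply_ne hn).trans
      one_one

theorem sum_Ioc_moebius_mul_div_of_le {R : Type*} [Ring R] {m N : ℕ} (hmN : m ≤ N) :
    ∑ n ∈ Ioc 0 N, (μ n : R) * (m / n : ℕ) = if m = 0 then 0 else 1 := by
  rw [← sum_Ioc_moebius_mul_div, eq_comm]
  refine sum_subset (Ioc_subset_Ioc_right hmN) fun n _ hnm => ?_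
  rw [Nat.div_eq_of_lt (by grind), Nat.cast_zero, mul_zero]

theorem nu_eq_natFloor_sub {y : ℝ} (hy : 0 ≤ y) : nu y = ⌊y⌋₊ - 2 * ⌊y / 2⌋₊ := by
  rw [nu, Int.fract, Int.fract, natCast_floor_eq_intCast_floor hy,
    natCast_floor_eq_intCast_floor (by positivity)]
  ring

theorem nu_div_natCast {x : ℝ} (hx : 0 ≤ x) (k : ℕ) :
    nu (x / k) = (⌊x⌋₊ / k : ℕ) - 2 * (⌊x⌋₊ / 2 / k : ℕ) := by
  rw [nu_eq_natFloor_sub (by positivity), Nat.floor_div_natCast, div_right_comm,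
    Nat.floor_div_natCast, Nat.floor_div_ofNat]

theorem nu_div_natCast_eq_zero {x : ℝ} (hx : 0 ≤ x) {k : ℕ} (hk : x < k) : nu (x / k) = 0 := by
  have hN : ⌊x⌋₊ < k := (Nat.floor_lt hx).2 hk
  rw [nu_div_natCast hx, Nat.div_eq_of_lt hN, Nat.div_eq_of_lt (by omega)]
  simp

theorem tsum_moebius_mul_nu_div {x : ℝ} (hx : 0 ≤ x) :
    ∑' k : ℕ, (μ (k + 1) : ℝ) * nu (x / (k + 1)) =
      (if ⌊x⌋₊ = 0 then 0 else 1) - 2 * (if ⌊x⌋₊ / 2 = 0 then 0 else 1) := by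
  set N := ⌊x⌋₊
  have hvanish : ∀ k ∉ range N, (μ (k + 1) : ℝ) * nu (x / (k + 1 : ℕ)) = 0 := fun k hk => by
    rw [nu_div_natCast_eq_zero hx ((Nat.floor_lt hx).1 (by grind)), mul_zero]
  simp_rw [← Nat.cast_add_one]
  rw [tsum_eq_sum hvanish, range_eq_Ico, sum_Ico_add' (fun k => (μ k : ℝ) * nu (x / k)),
    Ico_add_one_add_one_eq_Ioc]
  simp only [nu_div_natCast hx, mul_sub, mul_left_comm _ (2 : ℝ), sum_sub_distrib, ← mul_sum]
  rw [sum_Ioc_moebius_mul_div, sum_Ioc_moebius_mul_div_of_le (Nat.div_le_self N 2)]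

theorem stmt_7 : ∀ x : ℝ, 0 ≤ x →
    (∀ k : ℕ, x < k → (moebius k : ℝ) * nu (x / k) = 0) ∧
    (∑' k : ℕ, (moebius (k + 1) : ℝ) * nu (x / (k + 1))) =
      (if x < 1 then 0 else if x < 2 then 1 else -1) := by
  intro x hx
  refine ⟨fun k hk => by rw [nu_div_natCast_eq_zero hx hk, mul_zero], ?_⟩
  have h1 : ⌊x⌋₊ = 0 ↔ x < 1 := Nat.floor_eq_zero
  have h2 : ⌊x⌋₊ / 2 = 0 ↔ x < 2 := by
    rw [Nat.div_eq_zero_iff_lt two_pos, Nat.floor_lt hx, Nat.cast_ofNat]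
  rw [tsum_moebius_mul_nu_div hx]
  split_ifs <;> grind
end

section
/- For each positive integer n, the function f_n(x) = ∑_{k=1}^n μ(k)·ν(x/k) is constant on every interval [m, m+1) for integers m ≥ 1. -/
open ArithmeticFunction

noncomputable def fn (n : ℕ) (x : ℝ) : ℝ :=
  ∑ k ∈ Finset.Icc 1 n, (moebius k : ℝ) * nu (x / k)

/-! Since `Int.fract t = t - ⌊t⌋`, we have `ν t = ⌊t⌋ - 2⌊t/2⌋`, and `⌊x / k / 2⌋ = ⌊⌊x⌋ / k⌋ / 2`
for natural `k`; so every summand of `f_n x` depends on `x` only through `⌊x⌋`. -/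

lemma nu_eq_floor_sub (t : ℝ) : nu t = ⌊t⌋ - 2 * ⌊t / 2⌋ := by
  simp only [nu, Int.fract]
  ring

lemma nu_div_natCast_congr_floor {x y : ℝ} (h : ⌊x⌋ = ⌊y⌋) (k : ℕ) :
    nu (x / k) = nu (y / k) := by
  have h2 : ((2 : ℕ) : ℝ) = 2 := by norm_num
  simp only [nu_eq_floor_sub, ← h2, Int.floor_div_natCast, h]

lemma fn_congr_floor (n : ℕ) {x y : ℝ} (h : ⌊x⌋ = ⌊y⌋) : fn n x = fn n y :=
  Finset.sum_congr rfl fun k _ => by rw [nu_div_natCast_congr_floor h k]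

theorem stmt_11 : ∀ n : ℕ, 0 < n → ∀ m : ℕ, 1 ≤ m → ∀ x y : ℝ,
    x ∈ Set.Ico (m : ℝ) (m + 1) → y ∈ Set.Ico (m : ℝ) (m + 1) → fn n x = fn n y := by
  intro n _ m _ x y hx hy
  have floor_eq_of_mem {z : ℝ} (hz : z ∈ Set.Ico (m : ℝ) (m + 1)) : ⌊z⌋ = m :=
    Int.floor_eq_iff.mpr (by exact_mod_cast hz)
  exact fn_congr_floor n (by rw [floor_eq_of_mem hx, floor_eq_of_mem hy])
end

section
/- For every positive integer n and every complex s with Re(s) > 0, ∫₂^∞ (1 + f_n(x))·x^(−s−1) dx = (η(s)/s)·∑_{k=1}^n μ(k)/k^s − (1 − 2^(1−s))/s, where f_n(x) = ∑_{k=1}^n μ(k)·ν(x/k). -/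
open MeasureTheory ArithmeticFunction

/-! For `x ≥ 0`, `ν x = ⌊x⌋ mod 2` is the indicator of `⋃ₘ [2m+1, 2m+2)`, so the Mellin transform
of `ν` at `-s` is `∑ₘ ((2m+1)^{-s} - (2m+2)^{-s}) / s = η(s) / s`. Since `ν` vanishes on `[0, 1)`,
scaling gives `∫₁^∞ ν(x/k) x^{-s-1} dx = k^{-s} η(s) / s` for `k ≥ 1`, hence
`∫₁^∞ (1 + fₙ(x)) x^{-s-1} dx = 1/s + (η(s)/s) ∑ μ(k) k^{-s}`. On `[1, 2)` only the term `k = 1`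
of `fₙ` survives and `fₙ = 1`, so the part of this integral over `(1, 2]` is
`∫₁² 2 x^{-s-1} dx = (2 - 2^{1-s}) / s`. -/

open Set

theorem nu_eq_floor_emod_two (x : ℝ) : nu x = ((⌊x⌋ % 2 : ℤ) : ℝ) := by
  have h : ⌊x / 2⌋ = ⌊x⌋ / 2 := by exact_mod_cast Int.floor_div_natCast x 2
  rw [nu, Int.fract, Int.fract, h, Int.emod_def]
  push_cast
  ring

theorem abs_nu_le_one (x : ℝ) : |nu x| ≤ 1 := by
  rw [nu_eq_floor_emod_two, abs_le]
  have h0 := Int.emod_nonneg ⌊x⌋ two_ne_zero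
  have h1 := Int.emod_lt_of_pos ⌊x⌋ two_pos
  constructor <;> norm_cast <;> omega

theorem measurable_nu : Measurable nu :=
  (((measurable_id.div_const 2).fract).const_mul 2).sub measurable_fract

def oddInterval (m : ℕ) : Set ℝ := Ico (2 * m + 1) (2 * m + 2)

theorem measurableSet_oddInterval (m : ℕ) : MeasurableSet (oddInterval m) := measurableSet_Ico

theorem pairwise_disjoint_oddInterval : Pairwise (Function.onFun Disjoint oddInterval) :=
  (pairwise_disjoint_on oddInterval).2 fun i j hij => disjoint_left.2 fun x hi hj => by
    have : (i : ℝ) + 1 ≤ j := by exact_mod_cast hij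
    linarith [hi.2, hj.1]

theorem iUnion_oddInterval_subset_Ici : ⋃ m, oddInterval m ⊆ Ici 1 :=
  iUnion_subset fun m x hx => mem_Ici.2 (by linarith [hx.1, (m.cast_nonneg : (0 : ℝ) ≤ m)])

theorem nu_eq_indicator {x : ℝ} (hx : 0 ≤ x) : nu x = (⋃ m, oddInterval m).indicator 1 x := by
  obtain ⟨m, hm⟩ := Int.eq_ofNat_of_zero_le (Int.floor_nonneg.2 hx)
  have hmem : x ∈ ⋃ m, oddInterval m ↔ m % 2 = 1 := by
    simp only [mem_iUnion, oddInterval, mem_Ico]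
    constructor
    · rintro ⟨j, h1, h2⟩
      have : ⌊x⌋ = 2 * j + 1 := Int.floor_eq_iff.2 ⟨by push_cast; linarith, by push_cast; linarith⟩
      omega
    · intro h
      refine ⟨m / 2, ?_⟩
      have := Int.floor_eq_iff.1 hm
      have e : (m : ℝ) = 2 * ((m / 2 : ℕ) : ℝ) + 1 := by
        exact_mod_cast (by omega : m = 2 * (m / 2) + 1)
      push_cast at this
      constructor <;> linarith
  rcases Nat.mod_two_eq_zero_or_one m with h | h
  · rw [nu_eq_floor_emod_two, hm, indicator_of_notMem (by rw [hmem]; omega)]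
    norm_cast
  · rw [nu_eq_floor_emod_two, hm, indicator_of_mem (hmem.2 h)]
    norm_cast
    simp [h]

theorem nu_eq_zero_of_lt_one {x : ℝ} (h0 : 0 ≤ x) (h1 : x < 1) : nu x = 0 := by
  simp [nu_eq_floor_emod_two, Int.floor_eq_zero_iff.2 ⟨h0, h1⟩]

theorem nu_eq_one_of_mem_Ico {x : ℝ} (hx : x ∈ Ico 1 2) : nu x = 1 := by
  rw [nu_eq_indicator (zero_le_one.trans hx.1),
    indicator_of_mem (mem_iUnion.2 ⟨0, by simpa [oddInterval] using hx⟩)]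
  rfl

theorem re_neg_sub_one_lt {s : ℂ} (hs : 0 < s.re) : (-s - 1).re < -1 := by
  simp only [Complex.sub_re, Complex.neg_re, Complex.one_re]
  linarith

theorem integral_Ioc_cpow_neg_sub_one {a b : ℝ} (ha : 0 < a) (hab : a ≤ b) {s : ℂ}
    (hs : s ≠ 0) : ∫ x in Ioc a b, (x : ℂ) ^ (-s - 1) = ((a : ℂ) ^ (-s) - (b : ℂ) ^ (-s)) / s := by
  have h0 : (0 : ℝ) ∉ uIcc a b := by
    rw [uIcc_of_le hab]; exact fun h => ha.not_ge h.1
  rw [← intervalIntegral.integral_of_le hab,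
    integral_cpow (Or.inr ⟨fun h => hs (by linear_combination -h), h0⟩), sub_add_cancel]
  field_simp
  ring

theorem integrableOn_Ioi_mul_cpow {g : ℝ → ℂ} (hg : AEStronglyMeasurable g) {C : ℝ}
    (hC : ∀ x, ‖g x‖ ≤ C) {a : ℝ} (ha : 0 < a) {s : ℂ} (hs : 0 < s.re) :
    IntegrableOn (fun x => g x * (x : ℂ) ^ (-s - 1)) (Ioi a) :=
  (integrableOn_Ioi_cpow_of_lt (re_neg_sub_one_lt hs) ha).bdd_mul hg.restrict
    (ae_of_all _ hC)

theorem mellin_nu {s : ℂ} (hs : 0 < s.re) : mellin (fun x => (nu x : ℂ)) (-s) = eta s / s := by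
  have hint : IntegrableOn (fun x : ℝ => (x : ℂ) ^ (-s - 1)) (⋃ m, oddInterval m) :=
    ((integrableOn_Ici_iff_integrableOn_Ioi (by simp)).2
      (integrableOn_Ioi_cpow_of_lt (re_neg_sub_one_lt hs) one_pos)).mono_set
      iUnion_oddInterval_subset_Ici
  calc mellin (fun x => (nu x : ℂ)) (-s)
      = ∫ x in Ioi 0, (⋃ m, oddInterval m).indicator (fun x : ℝ => (x : ℂ) ^ (-s - 1)) x := by
        refine setIntegral_congr_fun measurableSet_Ioi fun x (hx : 0 < x) => ?_
        dsimp only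
        rw [smul_eq_mul, nu_eq_indicator hx.le]
        by_cases h : x ∈ ⋃ m, oddInterval m <;> simp [h]
    _ = ∑' m, ∫ x in oddInterval m, (x : ℂ) ^ (-s - 1) := by
        rw [setIntegral_indicator (MeasurableSet.iUnion measurableSet_oddInterval),
          inter_eq_right.2 (iUnion_oddInterval_subset_Ici.trans (Ici_subset_Ioi.2 one_pos)),
          integral_iUnion measurableSet_oddInterval pairwise_disjoint_oddInterval hint]
    _ = eta s / s := by
        rw [eta, ← tsum_div_const]
        refine tsum_congr fun m => ?_
        rw [oddInterval, integral_Ico_eq_integral_Ioo, ← integral_Ioc_eq_integral_Ioo,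
          integral_Ioc_cpow_neg_sub_one (by positivity) (by linarith)
            (Complex.ne_zero_of_re_pos hs)]
        push_cast
        ring_nf

theorem integrableOn_Ioi_nu_div_mul_cpow (c : ℝ) {a : ℝ} (ha : 0 < a) {s : ℂ} (hs : 0 < s.re) :
    IntegrableOn (fun x => (nu (x / c) : ℂ) * (x : ℂ) ^ (-s - 1)) (Ioi a) :=
  integrableOn_Ioi_mul_cpow
    (Complex.measurable_ofReal.comp
      (measurable_nu.comp (measurable_id.div_const c))).aestronglyMeasurable
    (fun x => by
      rw [Function.comp_apply, Complex.norm_real, Real.norm_eq_abs]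
      exact abs_nu_le_one _)
    ha hs

theorem integral_Ioi_one_nu_div_mul_cpow {c : ℝ} (hc : 1 ≤ c) {s : ℂ} (hs : 0 < s.re) :
    ∫ x in Ioi 1, (nu (x / c) : ℂ) * (x : ℂ) ^ (-s - 1) = (c : ℂ) ^ (-s) * (eta s / s) := by
  have hc0 : 0 < c := one_pos.trans_le hc
  calc ∫ x in Ioi 1, (nu (x / c) : ℂ) * (x : ℂ) ^ (-s - 1)
      = mellin (fun x => (nu (x * c⁻¹) : ℂ)) (-s) := by
        rw [mellin, ← integral_Ici_eq_integral_Ioi,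
          ← setIntegral_eq_of_subset_of_forall_sdiff_eq_zero measurableSet_Ioi
            (Ici_subset_Ioi.2 one_pos)]
        · exact setIntegral_congr_fun measurableSet_Ioi fun x _ => by
            rw [smul_eq_mul, mul_comm, div_eq_mul_inv]
        · rintro x ⟨hx0 : 0 < x, hx1⟩
          have hx1 : x < 1 := not_le.1 hx1
          rw [nu_eq_zero_of_lt_one (by positivity) ((div_lt_one hc0).2 (by linarith)),
            Complex.ofReal_zero, zero_mul]
    _ = (c : ℂ) ^ (-s) * (eta s / s) := by
        have harg : (c : ℂ).arg ≠ Real.pi := by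
          rw [Complex.arg_ofReal_of_nonneg hc0.le]
          exact Real.pi_ne_zero.symm
        rw [mellin_comp_mul_right (fun y => (nu y : ℂ)) _ (inv_pos.2 hc0), mellin_nu hs, neg_neg,
          smul_eq_mul, Complex.ofReal_inv, Complex.inv_cpow _ _ harg, Complex.cpow_neg]

theorem fn_eq_one_of_mem_Ico {n : ℕ} (hn : 0 < n) {x : ℝ} (hx : x ∈ Ico 1 2) : fn n x = 1 := by
  rw [fn, Finset.sum_eq_single_of_mem 1 (Finset.mem_Icc.2 ⟨le_rfl, hn⟩)]
  · simp [nu_eq_one_of_mem_Ico hx]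
  · intro k hk hk1
    have hk2 : (2 : ℝ) ≤ k := by
      have := (Finset.mem_Icc.1 hk).1
      exact_mod_cast (by omega : 2 ≤ k)
    rw [nu_eq_zero_of_lt_one (div_nonneg (by linarith [hx.1]) (by linarith))
      ((div_lt_one (by linarith)).2 (by linarith [hx.2])), mul_zero]

theorem one_add_fn_mul_cpow (n : ℕ) (x : ℝ) (r : ℂ) :
    (1 + (fn n x : ℂ)) * (x : ℂ) ^ r
      = (x : ℂ) ^ r + ∑ k ∈ Finset.Icc 1 n, (moebius k : ℂ) * ((nu (x / k) : ℂ) * (x : ℂ) ^ r) := by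
  simp only [fn, Complex.ofReal_sum, Complex.ofReal_mul, Complex.ofReal_intCast, add_mul, one_mul,
    Finset.sum_mul, mul_assoc]

theorem integrableOn_Ioi_one_add_fn_mul_cpow (n : ℕ) {a : ℝ} (ha : 0 < a) {s : ℂ}
    (hs : 0 < s.re) : IntegrableOn (fun x => (1 + (fn n x : ℂ)) * (x : ℂ) ^ (-s - 1)) (Ioi a) := by
  simp only [one_add_fn_mul_cpow]
  exact (integrableOn_Ioi_cpow_of_lt (re_neg_sub_one_lt hs) ha).add
    (integrable_finsetSum _ fun (k : ℕ) _ =>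
      (integrableOn_Ioi_nu_div_mul_cpow k ha hs).const_mul _)

theorem integral_Ioi_one_one_add_fn_mul_cpow (n : ℕ) {s : ℂ} (hs : 0 < s.re) :
    ∫ x in Ioi 1, (1 + (fn n x : ℂ)) * (x : ℂ) ^ (-s - 1)
      = 1 / s + eta s / s * ∑ k ∈ Finset.Icc 1 n, (moebius k : ℂ) / (k : ℂ) ^ s := by
  simp only [one_add_fn_mul_cpow]
  rw [integral_add (integrableOn_Ioi_cpow_of_lt (re_neg_sub_one_lt hs) one_pos)
      (integrable_finsetSum _ fun (k : ℕ) _ =>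
        (integrableOn_Ioi_nu_div_mul_cpow k one_pos hs).const_mul _),
    integral_finsetSum _ fun (k : ℕ) _ =>
      (integrableOn_Ioi_nu_div_mul_cpow k one_pos hs).const_mul _,
    integral_Ioi_cpow_of_lt (re_neg_sub_one_lt hs) one_pos, Finset.mul_sum]
  congr 1
  · simp
  · refine Finset.sum_congr rfl fun k hk => ?_
    have hk1 : (1 : ℝ) ≤ k := by exact_mod_cast (Finset.mem_Icc.1 hk).1
    rw [integral_const_mul, integral_Ioi_one_nu_div_mul_cpow hk1 hs, Complex.ofReal_natCast,
      Complex.cpow_neg]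
    ring

theorem integral_Ioc_one_two_one_add_fn_mul_cpow {n : ℕ} (hn : 0 < n) {s : ℂ} (hs : s ≠ 0) :
    ∫ x in Ioc 1 2, (1 + (fn n x : ℂ)) * (x : ℂ) ^ (-s - 1) = (2 - 2 ^ (1 - s)) / s := by
  rw [integral_Ioc_eq_integral_Ioo,
    setIntegral_congr_fun measurableSet_Ioo fun x hx => by
      rw [fn_eq_one_of_mem_Ico hn (Ioo_subset_Ico_self hx)],
    integral_const_mul, ← integral_Ioc_eq_integral_Ioo,
    integral_Ioc_cpow_neg_sub_one one_pos one_le_two hs, sub_eq_add_neg (1 : ℂ) s,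
    Complex.cpow_add _ _ two_ne_zero, Complex.cpow_one, Complex.ofReal_one, Complex.one_cpow]
  push_cast
  ring

theorem stmt_13 : ∀ n : ℕ, 0 < n → ∀ s : ℂ, 0 < s.re →
    ∫ x in Set.Ioi (2 : ℝ), (1 + (fn n x : ℂ)) * (x : ℂ) ^ (-s - 1) =
      (eta s / s) * (∑ k ∈ Finset.Icc 1 n, (moebius k : ℂ) / (k : ℂ) ^ s) -
        (1 - 2 ^ (1 - s)) / s := by
  intro n hn s hs
  have hint := integrableOn_Ioi_one_add_fn_mul_cpow n one_pos hs
  have hsplit := setIntegral_union (Ioc_disjoint_Ioi le_rfl) measurableSet_Ioi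
    (hint.mono_set Ioc_subset_Ioi_self) (hint.mono_set (Ioi_subset_Ioi one_le_two))
  rw [Ioc_union_Ioi_eq_Ioi one_le_two, integral_Ioi_one_one_add_fn_mul_cpow n hs,
    integral_Ioc_one_two_one_add_fn_mul_cpow hn (Complex.ne_zero_of_re_pos hs)] at hsplit
  linear_combination -hsplit
end
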